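/- Let n be even. Then the cycle C of length 2n in Q_n starting at the vertex ∅ with edge-direction sequence (1, 2, ..., n, 1, 2, ..., n) is a subgraph of Q_n, and the translates of E(C) under the group {σ_A : A ⊆ {1,...,n-1}, |A| even} of complementing automorphisms partition E(Q_n); hence this 2n-cycle divides Q_n. -/

import Mathlib

open SimpleGraph

/-- `H` divides `G`: the edge set of `G` can be partitioned into edge sets of
subgraphs of `G`, each isomorphic to `H`. -/
def GraphDivides {α β : Type} (H : SimpleGraph α) (G : SimpleGraph β) : Prop :=
  ∃ (ι : Type) (f : ι → G.Subgraph),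
    (∀ i, Nonempty (H ≃g (f i).coe)) ∧
    ∀ e ∈ G.edgeSet, ∃! i, e ∈ (f i).edgeSet

/-- The `n`-dimensional hypercube graph. -/
def cube (n : ℕ) : SimpleGraph (Fin n → ZMod 2) where
  Adj x y := hammingDist x y = 1
  symm := ⟨fun x y (h : hammingDist x y = 1) => (hammingDist_comm y x).trans h⟩
  loopless := ⟨fun x (h : hammingDist x x = 1) => by simp [hammingDist_self] at h⟩

/-- The vertex reached after `t` steps of the walk starting at `∅` (the all-zero vector)
with edge-direction sequence `1, 2, ..., n, 1, 2, ..., n` (toggling one coordinate per step). -/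
def cycVert (n : ℕ) (t : ℕ) : Fin n → ZMod 2 :=
  fun j => if t ≤ n then (if (j : ℕ) < t then 1 else 0) else (if (j : ℕ) < t - n then 0 else 1)

/-- The edge set of the closed walk of length `2n` with direction sequence
`1, 2, ..., n, 1, 2, ..., n` starting at `∅`. -/
def cycEdges (n : ℕ) : Set (Sym2 (Fin n → ZMod 2)) :=
  {e | ∃ t < 2 * n, e = s(cycVert n t, cycVert n (t + 1))}

/-- The complementing automorphism `σ_A`, where `A` is viewed as its indicator vector `a`. -/
def sigmaMap {n : ℕ} (a : Fin n → ZMod 2) : (Fin n → ZMod 2) → (Fin n → ZMod 2) :=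
  fun x => a + x

/-!
Write `v_t` for the `t`-th vertex of `C` and `e_j` for the `j`-th unit vector. Because
`v_{n+t} = 𝟙 + v_t`, the edges of `C` are the pairs `{c𝟙 + v_j, c𝟙 + v_j + e_j}` with `c ∈ 𝔽₂` and
`j < n`; hence the cube edge `{x, x + e_j}` lies in `σ_a(C)` exactly when
`a ∈ x + v_j + span {e_j, 𝟙}`. The linear forms `a ↦ ∑ a` and `a ↦ a_{n-1}` send `e_j` to `(1, *)`
and `𝟙` to `(n, 1) = (0, 1)` since `n` is even, so their common kernel, which is the group of
translations, meets every coset of `span {e_j, 𝟙}` exactly once. Each translate is a copy of the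
`2n`-cycle because `t ↦ v_t` is injective on `[0, 2n)`.
-/

open Function

section ZModModule

variable {M : Type*} [AddCommGroup M] [Module (ZMod 2) M]

lemma ZModModule.eq_add_iff_eq_add (x a w : M) : x = a + w ↔ a = x + w := by
  rw [eq_comm, ← eq_sub_iff_add_eq, ZModModule.sub_eq_add]

lemma Sym2.mk_add_eq_mk_add_iff (x y u v : M) :
    s(x, x + u) = s(y, y + v) ↔ u = v ∧ ∃ b : ZMod 2, y = x + b • u := by
  rw [Sym2.eq_iff]
  constructor
  · rintro (⟨rfl, h⟩ | ⟨rfl, h⟩)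
    · exact ⟨add_left_cancel h, 0, by simp⟩
    · have hvu : v + u = 0 := by rwa [add_assoc, add_eq_left] at h
      obtain rfl : u = v := by
        rw [← ZModModule.neg_eq_self v]
        exact (neg_eq_of_add_eq_zero_right hvu).symm
      exact ⟨rfl, 1, by rw [one_smul, add_assoc, ZModModule.add_self, add_zero]⟩
  · rintro ⟨rfl, b, rfl⟩
    obtain rfl | rfl : b = 0 ∨ b = 1 := by revert b; decide
    · left; simp
    · right; simp [add_assoc, ZModModule.add_self]

end ZModModule

lemma existsUnique_vanishing_add_smul_add_smul {R M : Type*} [CommRing R] [AddCommGroup M]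
    [Module R M] (f g : M →ₗ[R] R) {s o : M} (hfs : f s = 1) (hfo : f o = 0) (hgo : g o = 1)
    (w : M) : ∃! a, (g a = 0 ∧ f a = 0) ∧ ∃ b c : R, a = w + b • s + c • o := by
  refine ⟨w + (-f w) • s + (-g (w + (-f w) • s)) • o, ⟨⟨?_, ?_⟩, _, _, rfl⟩, ?_⟩
  · simp [hgo]
  · simp [hfs, hfo]
  · rintro a ⟨⟨hga, hfa⟩, b, c, rfl⟩
    obtain rfl : b = -f w := by
      simp only [map_add, map_smul, hfs, hfo, smul_eq_mul] at hfa
      linear_combination hfa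
    obtain rfl : c = -g (w + (-f w) • s) := by
      rw [map_add _ (w + _), map_smul, hgo, smul_eq_mul] at hga
      linear_combination hga
    rfl

section Hamming

variable {ι : Type*} [Fintype ι]

lemma hammingDist_add_single_one [DecidableEq ι] (x : ι → ZMod 2) (j : ι) :
    hammingDist x (x + Pi.single j 1) = 1 := by
  rw [hammingDist_eq_hammingNorm, neg_add_cancel_left]
  simp [hammingNorm, Pi.single_apply, Finset.filter_eq']

lemma exists_eq_add_single_of_hammingDist_eq_one [DecidableEq ι] {x y : ι → ZMod 2}
    (h : hammingDist x y = 1) : ∃ j, y = x + Pi.single j 1 := by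
  rw [hammingDist_eq_hammingNorm] at h
  obtain ⟨j, hj⟩ := Finset.card_eq_one.mp h
  have hsupp (i : ι) : (-x + y) i ≠ 0 ↔ i = j := by
    simpa only [Finset.mem_filter, Finset.mem_univ, true_and, Finset.mem_singleton]
      using Finset.ext_iff.mp hj i
  have hone : ∀ c : ZMod 2, c ≠ 0 → c = 1 := by decide
  refine ⟨j, eq_add_of_neg_add_eq (funext fun i => ?_)⟩
  by_cases hij : i = j
  · subst hij
    simpa using hone _ ((hsupp i).mpr rfl)
  · simpa [hij] using mt (hsupp i).mp hij

lemma even_hammingNorm_iff_sum_eq_zero (z : ι → ZMod 2) :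
    Even (hammingNorm z) ↔ ∑ i, z i = 0 := by
  have hbit : ∀ c : ZMod 2, c = if c ≠ 0 then 1 else 0 := by decide
  rw [Finset.sum_congr rfl fun i _ => hbit (z i), Finset.sum_boole, ZMod.natCast_eq_zero_iff_even]
  rfl

end Hamming

lemma SimpleGraph.cycleGraph_adj_iff_eq_add_one {m : ℕ} [NeZero m] (hm : 1 < m) {u v : Fin m} :
    (cycleGraph m).Adj u v ↔ v = u + 1 ∨ u = v + 1 := by
  have h1 : ((1 : Fin m) : ℕ) = 1 := by rw [Fin.val_one', Nat.mod_eq_of_lt hm]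
  rw [cycleGraph_adj', ← h1, ← Fin.ext_iff, ← Fin.ext_iff, sub_eq_iff_eq_add',
    sub_eq_iff_eq_add', or_comm]

def cubeAddLeft {n : ℕ} (a : Fin n → ZMod 2) : cube n ≃g cube n where
  toFun := sigmaMap a
  invFun := sigmaMap (-a)
  left_inv := neg_add_cancel_left a
  right_inv := add_neg_cancel_left a
  map_rel_iff' {x y} := by
    change hammingDist (a + x) (a + y) = 1 ↔ hammingDist x y = 1
    rw [hammingDist_eq_hammingNorm, neg_add_rev, add_assoc, neg_add_cancel_left,
      ← hammingDist_eq_hammingNorm]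

section CycleVertices

variable {n : ℕ}

-- For `t ≤ n` the truncated subtraction makes the window `[t - n, t)` equal to `[0, t)`.
lemma cycVert_apply (t : ℕ) (j : Fin n) :
    cycVert n t j = if t - n ≤ j ∧ (j : ℕ) < t then 1 else 0 := by
  have := j.isLt
  unfold cycVert
  split_ifs <;> first | rfl | (exfalso; omega)

lemma cycVert_zero : cycVert n 0 = 0 := by
  funext j
  rw [cycVert_apply, if_neg (by omega), Pi.zero_apply]

lemma cycVert_two_mul : cycVert n (2 * n) = 0 := by
  funext j
  rw [cycVert_apply, if_neg (by have := j.isLt; omega), Pi.zero_apply]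

lemma cycVert_succ (j : Fin n) : cycVert n (j + 1) = cycVert n j + Pi.single j 1 := by
  funext i
  have := i.isLt
  simp only [cycVert_apply, Pi.add_apply, Pi.single_apply, Fin.ext_iff]
  split_ifs <;> first | rfl | (exfalso; omega)

lemma cycVert_add_left {t : ℕ} (ht : t ≤ n) : cycVert n (n + t) = 1 + cycVert n t := by
  funext i
  have := i.isLt
  simp only [cycVert_apply, Pi.add_apply, Pi.one_apply]
  split_ifs <;> first | rfl | (exfalso; omega)

lemma cycVert_injective : Injective fun t : Fin (2 * n) => cycVert n t := by
  intro s t h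
  have hwindow : ∀ j < n, (s - n ≤ j ∧ j < (s : ℕ) ↔ t - n ≤ j ∧ j < (t : ℕ)) := fun j hj => by
    have hj := congrFun h ⟨j, hj⟩
    simp only [cycVert_apply] at hj
    split_ifs at hj <;> tauto
  -- the windows `[s - n, s)` and `[t - n, t)` of distinct `s, t < 2n` differ at one of these points
  have := hwindow 0; have := hwindow (n - 1); have := hwindow (s - n); have := hwindow s
  have := hwindow (t - n); have := hwindow t
  omega

lemma cycEdges_eq : cycEdges n = {e | ∃ (c : ZMod 2) (j : Fin n),
    e = s(c • 1 + cycVert n j, c • 1 + cycVert n j + Pi.single j 1)} := by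
  ext e
  constructor
  · rintro ⟨t, ht, rfl⟩
    rcases lt_or_ge t n with htn | htn
    · refine ⟨0, ⟨t, htn⟩, ?_⟩
      rw [zero_smul, zero_add, ← cycVert_succ]
    · obtain ⟨i, rfl⟩ := Nat.exists_eq_add_of_le htn
      refine ⟨1, ⟨i, by omega⟩, ?_⟩
      rw [one_smul, add_assoc (1 : Fin n → ZMod 2), ← cycVert_succ, ← cycVert_add_left (by omega),
        ← cycVert_add_left (by omega : i + 1 ≤ n)]
      rfl
  · rintro ⟨c, j, rfl⟩
    obtain rfl | rfl : c = 0 ∨ c = 1 := by revert c; decide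
    · exact ⟨j, by omega, by simp [cycVert_succ]⟩
    · refine ⟨n + j, by omega, ?_⟩
      rw [one_smul, add_assoc (1 : Fin n → ZMod 2), ← cycVert_succ, ← cycVert_add_left j.isLt.le,
        ← cycVert_add_left (by omega : (j : ℕ) + 1 ≤ n)]
      rfl

lemma cycEdges_subset_edgeSet : cycEdges n ⊆ (cube n).edgeSet := by
  rw [cycEdges_eq]
  rintro _ ⟨c, j, rfl⟩
  exact hammingDist_add_single_one _ j

lemma mk_add_single_mem_image_cycEdges_iff (a x : Fin n → ZMod 2) (j : Fin n) :
    s(x, x + Pi.single j 1) ∈ Sym2.map (sigmaMap a) '' cycEdges n ↔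
      ∃ b c : ZMod 2, a = x + cycVert n j + b • Pi.single j 1 + c • 1 := by
  have hmap (c : ZMod 2) (i : Fin n) : Sym2.map (sigmaMap a)
      s(c • 1 + cycVert n i, c • 1 + cycVert n i + Pi.single i 1) =
        s(a + (c • 1 + cycVert n i), a + (c • 1 + cycVert n i) + Pi.single i 1) := by
    simp only [Sym2.map_mk, sigmaMap, add_assoc]
  rw [cycEdges_eq]
  constructor
  · rintro ⟨_, ⟨c, i, rfl⟩, he⟩
    rw [hmap, Sym2.mk_add_eq_mk_add_iff] at he
    obtain ⟨hij, b, hx⟩ := he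
    obtain rfl : i = j := by simpa [Pi.single_apply] using congrFun hij i
    refine ⟨b, c, ?_⟩
    rw [add_assoc, ZModModule.eq_add_iff_eq_add] at hx
    rw [hx]
    abel
  · rintro ⟨b, c, ha⟩
    refine ⟨_, ⟨c, j, rfl⟩, ?_⟩
    rw [hmap, Sym2.mk_add_eq_mk_add_iff]
    refine ⟨rfl, b, ?_⟩
    rw [add_assoc a, ZModModule.eq_add_iff_eq_add, ha]
    abel

variable [NeZero n]

lemma cycVert_fin_add_one (p : Fin (2 * n)) : cycVert n ↑(p + 1) = cycVert n (↑p + 1) := by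
  have hn := NeZero.pos n
  rw [Fin.val_add, Fin.val_one', Nat.mod_eq_of_lt (by omega : 1 < 2 * n)]
  rcases (Nat.succ_le_of_lt p.isLt).lt_or_eq with hp | hp
  · rw [Nat.mod_eq_of_lt hp]
  · rw [show (p : ℕ) + 1 = 2 * n from hp, Nat.mod_self, cycVert_zero, cycVert_two_mul]

lemma image_cycleGraph_edgeSet :
    Sym2.map (fun t : Fin (2 * n) => cycVert n t) '' (cycleGraph (2 * n)).edgeSet =
      cycEdges n := by
  have h2n : 1 < 2 * n := by have := NeZero.pos n; omega
  ext e
  constructor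
  · rintro ⟨e', he', rfl⟩
    induction e' using Sym2.ind with | _ p q => ?_
    rw [mem_edgeSet, cycleGraph_adj_iff_eq_add_one h2n] at he'
    rcases he' with rfl | rfl
    · exact ⟨p, p.isLt, by rw [Sym2.map_mk, cycVert_fin_add_one]⟩
    · exact ⟨q, q.isLt, by rw [Sym2.map_mk, cycVert_fin_add_one, Sym2.eq_swap]⟩
  · rintro ⟨t, ht, rfl⟩
    refine ⟨s(⟨t, ht⟩, ⟨t, ht⟩ + 1), ?_, ?_⟩
    · rw [mem_edgeSet, cycleGraph_adj_iff_eq_add_one h2n]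
      exact Or.inl rfl
    · rw [Sym2.map_mk, cycVert_fin_add_one]

def cycleCopy : Copy (cycleGraph (2 * n)) (cube n) where
  toHom.toFun t := cycVert n t
  toHom.map_rel' {p q} h := by
    have hpq : s(cycVert n p, cycVert n q) ∈ cycEdges n := by
      rw [← image_cycleGraph_edgeSet]
      exact ⟨s(p, q), h, rfl⟩
    exact cycEdges_subset_edgeSet hpq
  injective' := cycVert_injective

lemma edgeSet_toSubgraph_cubeAddLeft_comp_cycleCopy (a : Fin n → ZMod 2) :
    ((cubeAddLeft a).toCopy.comp cycleCopy).toSubgraph.edgeSet =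
      Sym2.map (sigmaMap a) '' cycEdges n := by
  rw [Copy.toSubgraph, Subgraph.edgeSet_map, Subgraph.edgeSet_top, ← image_cycleGraph_edgeSet,
    Set.image_image]
  simp only [Sym2.map_map, Copy.coe_toHom, Copy.coe_comp]
  rfl

end CycleVertices

theorem cycle_fundamental (n : ℕ) (hn : Even n) (h2 : 2 ≤ n) :
    cycEdges n ⊆ (cube n).edgeSet ∧
    (∀ e ∈ (cube n).edgeSet,
      ∃! a : Fin n → ZMod 2,
        (a ⟨n - 1, by omega⟩ = 0 ∧ Even (hammingDist a 0)) ∧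
        e ∈ Sym2.map (sigmaMap a) '' cycEdges n) ∧
    GraphDivides (cycleGraph (2 * n)) (cube n) := by
  have : NeZero n := ⟨by omega⟩
  have htranslates (e) (he : e ∈ (cube n).edgeSet) : ∃! a : Fin n → ZMod 2,
      (a ⟨n - 1, by omega⟩ = 0 ∧ Even (hammingDist a 0)) ∧
        e ∈ Sym2.map (sigmaMap a) '' cycEdges n := by
    induction e using Sym2.ind with | _ x y => ?_
    rw [mem_edgeSet] at he
    obtain ⟨j, rfl⟩ := exists_eq_add_single_of_hammingDist_eq_one he
    have hunique := existsUnique_vanishing_add_smul_add_smul (∑ i, LinearMap.proj i)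
      (LinearMap.proj (R := ZMod 2) (φ := fun _ : Fin n => ZMod 2) ⟨n - 1, by omega⟩)
      (s := Pi.single j 1) (o := 1) (by simp) (by simpa using hn.natCast_zmod_two) rfl
      (x + cycVert n j)
    simpa only [mk_add_single_mem_image_cycEdges_iff, hammingDist_zero_right,
      even_hammingNorm_iff_sum_eq_zero, LinearMap.coe_sum, LinearMap.coe_proj, Finset.sum_apply,
      Function.eval] using hunique
  refine ⟨cycEdges_subset_edgeSet, htranslates, _,
    fun a : {a : Fin n → ZMod 2 // a ⟨n - 1, by omega⟩ = 0 ∧ Even (hammingDist a 0)} =>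
      ((cubeAddLeft a.1).toCopy.comp cycleCopy).toSubgraph,
    fun _ => ⟨Copy.isoToSubgraph _⟩, fun e he => ?_⟩
  obtain ⟨a, ⟨ha, hea⟩, huniq⟩ := htranslates e he
  refine ⟨⟨a, ha⟩, ?_, fun b hb => Subtype.ext (huniq b ⟨b.2, ?_⟩)⟩
  · simpa only [edgeSet_toSubgraph_cubeAddLeft_comp_cycleCopy] using hea
  · simpa only [edgeSet_toSubgraph_cubeAddLeft_comp_cycleCopy] using hb
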